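/- Let a > 0 and c ≥ 1. Let ν be a probability measure on ℤ whose probability mass function belongs to the class Q(a, c), and let μ be a centered (mean-zero) log-concave probability measure on ℤ with variance at most 1 whose support is contained in the support of ν. Let Y be a random variable with distribution μ and assume E[e^{2aY²}] < ∞. Then d_{χ²}(μ‖ν) ≤ c·( d_TV(μ, ν) + √(d_TV(μ, ν)) ) + c·√(E[e^{2aY²}])·√2·exp( −(1/12)·√( (1/a)·log( 1 + 1/√(d_TV(μ, ν)) ) ) ). -/

import Mathlib

open MeasureTheory ProbabilityTheory
open scoped ProbabilityTheory

/-- A function `p : ℤ → ℝ` is a log-concave probability mass function if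
`p(k)² ≥ p(k-1)·p(k+1)` for all `k ∈ ℤ` and its support is an integer interval. -/
def IsLogConcavePMF (p : ℤ → ℝ) : Prop :=
  (∀ k : ℤ, p (k - 1) * p (k + 1) ≤ p k ^ 2) ∧
  (∀ a b c : ℤ, a ≤ b → b ≤ c → 0 < p a → 0 < p c → 0 < p b)

/-- The class `Q(a,c)` of functions `q : ℤ → [0,1]` such that
`log(1/q(k)) ≤ a·k² + log(c)` for all `k` in the support of `q`. -/
def MemQClass (a c : ℝ) (q : ℤ → ℝ) : Prop :=
  (∀ k : ℤ, 0 ≤ q k ∧ q k ≤ 1) ∧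
  (∀ k : ℤ, 0 < q k → Real.log (1 / q k) ≤ a * (k : ℝ) ^ 2 + Real.log c)

/-- The `χ²`-divergence `d_{χ²}(μ‖ν) = Σ_k ν({k})·(μ({k})/ν({k}) − 1)²`, expressed
through the probability mass functions `p` of `μ` and `q` of `ν`. -/
noncomputable def chiSqDiv (p q : ℤ → ℝ) : ℝ :=
  ∑' k : ℤ, q k * (p k / q k - 1) ^ 2

/-- The total variation distance `d_TV(μ,ν) = Σ_k |μ({k}) − ν({k})|`, expressed
through the probability mass functions `p` of `μ` and `q` of `ν`. -/
noncomputable def dTV (p q : ℤ → ℝ) : ℝ :=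
  ∑' k : ℤ, |p k - q k|

/-!
Split the `χ²` sum at `|k| = ⌈K⌉`, where `K = √((1/a) log(1 + 1/√d_TV))`. In the bulk,
`1/q(k) ≤ c e^{a k²} ≤ c (1 + 1/√d_TV)` and `(p - q)² ≤ |p - q|`, which gives `c (d_TV + √d_TV)`.
In the tails each term is at most `|p - q| + c e^{a k²} p²`, and Cauchy–Schwarz bounds the tail
sum of `e^{a k²} p²` by `√E[e^{2aY²}] · √P(|Y| ≥ K)`.

The tail function `m ↦ P(Y ≥ m)` of a log-concave law is again log-concave. Cantelli's
inequality gives `P(Y ≥ 1) ≤ 1/2 ≤ P(Y ≥ 0)` and `P(Y ≥ 3) ≤ 1/9`, so log-concavity yields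
`P(Y ≥ m + 3) ≤ (2/9) P(Y ≥ m)` for `m ≥ 0`, hence `P(Y ≥ n) ≤ e^{-n/6}`; the same holds for `-Y`.
-/
open Real Set

namespace IsLogConcavePMF

variable {g : ℤ → ℝ}

theorem mul_le_mul_succ (hg : IsLogConcavePMF g) (h0 : ∀ k, 0 ≤ g k) {u v : ℤ} (huv : u ≤ v) :
    g (v + 1) * g u ≤ g v * g (u + 1) := by
  induction v, huv using Int.leInduction with
  | base => rw [mul_comm]
  | succ v huv ih =>
    have hlc : g v * g (v + 1 + 1) ≤ g (v + 1) ^ 2 := by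
      simpa using hg.1 (v + 1)
    rcases (h0 (v + 1)).lt_or_eq with hpos | hzero
    · refine le_of_mul_le_mul_right ?_ hpos
      calc g (v + 1 + 1) * g u * g (v + 1) = g (v + 1 + 1) * (g (v + 1) * g u) := by ring
        _ ≤ g (v + 1 + 1) * (g v * g (u + 1)) := by gcongr; exact h0 _
        _ = g v * g (v + 1 + 1) * g (u + 1) := by ring
        _ ≤ g (v + 1) ^ 2 * g (u + 1) := by gcongr; exact h0 _
        _ = g (v + 1) * g (u + 1) * g (v + 1) := by ring
    · have hends : g (v + 1 + 1) = 0 ∨ g u = 0 := by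
        by_contra! h
        exact (hg.2 u (v + 1) (v + 1 + 1) (by omega) (by omega) ((h0 u).lt_of_ne' h.2)
          ((h0 _).lt_of_ne' h.1)).ne' hzero.symm
      rcases hends with h | h <;> simp [h, ← hzero]

theorem mul_le_mul_add (hg : IsLogConcavePMF g) (h0 : ∀ k, 0 ≤ g k) (t : ℕ) :
    ∀ {u v : ℤ}, u ≤ v → g (v + t) * g u ≤ g v * g (u + t) := by
  induction t with
  | zero => intro u v _; simp [mul_comm]
  | succ t ih =>
    intro u v huv
    rcases huv.eq_or_lt with rfl | hlt
    · rw [mul_comm]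
    calc g (v + (t + 1 : ℕ)) * g u = g (v + t + 1) * g u := by push_cast; ring_nf
      _ ≤ g (v + t) * g (u + 1) := hg.mul_le_mul_succ h0 (by omega)
      _ ≤ g v * g (u + 1 + t) := ih (by omega)
      _ = g v * g (u + (t + 1 : ℕ)) := by push_cast; ring_nf

theorem comp_neg (hg : IsLogConcavePMF g) : IsLogConcavePMF fun k => g (-k) := by
  refine ⟨fun k => ?_, fun a b c hab hbc ha hc => hg.2 (-c) (-b) (-a) (by omega) (by omega) hc ha⟩
  simpa [neg_add_eq_sub, mul_comm, ← sub_eq_neg_add] using hg.1 (-k)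

end IsLogConcavePMF

noncomputable def upperTail (g : ℤ → ℝ) (m : ℤ) : ℝ :=
  ∑' k, (Ici m).indicator g k

section UpperTail

variable {g : ℤ → ℝ}

theorem upperTail_eq_tsum_nat (g : ℤ → ℝ) (m : ℤ) : upperTail g m = ∑' j : ℕ, g (m + j) := by
  have hinj : Function.Injective fun j : ℕ => m + j := fun i j h => by simpa using h
  rw [upperTail, ← hinj.tsum_eq]
  · simp [indicator_of_mem]
  · intro k hk
    exact ⟨(k - m).toNat, by have := mem_Ici.mp (support_indicator_subset hk); simp; omega⟩

theorem upperTail_nonneg (h0 : ∀ k, 0 ≤ g k) (m : ℤ) : 0 ≤ upperTail g m :=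
  tsum_nonneg fun _ => indicator_nonneg (fun k _ => h0 k) _

theorem upperTail_antitone (h0 : ∀ k, 0 ≤ g k) (hs : Summable g) : Antitone (upperTail g) :=
  fun _ _ hmn => (hs.indicator _).tsum_le_tsum
    (fun _ => indicator_le_indicator_of_subset (Ici_subset_Ici.mpr hmn) h0 _) (hs.indicator _)

theorem summable_comp_add_nat (hs : Summable g) (m : ℤ) : Summable fun j : ℕ => g (m + j) :=
  hs.comp_injective fun i j h => by simpa using h

theorem upperTail_eq_add_upperTail_succ (hs : Summable g) (m : ℤ) :
    upperTail g m = g m + upperTail g (m + 1) := by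
  simp only [upperTail_eq_tsum_nat, (summable_comp_add_nat hs m).tsum_eq_zero_add]
  simp [add_assoc, add_comm (1 : ℤ)]

theorem IsLogConcavePMF.mul_upperTail_succ_le (hg : IsLogConcavePMF g) (h0 : ∀ k, 0 ≤ g k)
    (hs : Summable g) (m : ℤ) : g (m - 1) * upperTail g (m + 1) ≤ g m * upperTail g m := by
  simp only [upperTail_eq_tsum_nat, ← tsum_mul_left]
  refine ((summable_comp_add_nat hs _).mul_left _).tsum_le_tsum (fun j => ?_)
    ((summable_comp_add_nat hs _).mul_left _)
  simpa [mul_comm, add_right_comm] using hg.mul_le_mul_succ h0 (u := m - 1) (v := m + j) (by omega)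

theorem IsLogConcavePMF.upperTail (hg : IsLogConcavePMF g) (h0 : ∀ k, 0 ≤ g k)
    (hs : Summable g) : IsLogConcavePMF (upperTail g) := by
  refine ⟨fun m => ?_, fun a b c _ hbc _ hc => hc.trans_le (upperTail_antitone h0 hs hbc)⟩
  have hprev : _root_.upperTail g (m - 1) = g (m - 1) + _root_.upperTail g m := by
    simpa using upperTail_eq_add_upperTail_succ hs (m - 1)
  have hkey := hg.mul_upperTail_succ_le h0 hs m
  rw [hprev]
  rw [upperTail_eq_add_upperTail_succ hs m] at hkey ⊢
  nlinarith

end UpperTail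

structure IsCenteredLogConcaveVarLeOne (p : ℤ → ℝ) : Prop where
  nonneg : ∀ k, 0 ≤ p k
  hasSum_one : HasSum p 1
  logConcave : IsLogConcavePMF p
  summable_sq_mul : Summable fun k : ℤ => (k : ℝ) ^ 2 * p k
  tsum_mul_eq_zero : ∑' k : ℤ, (k : ℝ) * p k = 0
  tsum_sq_mul_le_one : ∑' k : ℤ, (k : ℝ) ^ 2 * p k ≤ 1

namespace IsCenteredLogConcaveVarLeOne

variable {p : ℤ → ℝ}

theorem summable_mul (hp : IsCenteredLogConcaveVarLeOne p) :
    Summable fun k : ℤ => (k : ℝ) * p k := by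
  refine (hp.summable_sq_mul.add hp.hasSum_one.summable).of_norm_bounded fun k => ?_
  rw [norm_mul, Real.norm_eq_abs, Real.norm_of_nonneg (hp.nonneg k), ← add_one_mul]
  gcongr
  · exact hp.nonneg k
  · nlinarith [sq_abs (k : ℝ), abs_nonneg (k : ℝ)]

theorem hasSum_add_sq_mul (hp : IsCenteredLogConcaveVarLeOne p) (u : ℝ) :
    HasSum (fun k : ℤ => ((k : ℝ) + u) ^ 2 * p k) (∑' k : ℤ, (k : ℝ) ^ 2 * p k + u ^ 2) := by
  have h := (hp.summable_sq_mul.hasSum.add (hp.summable_mul.hasSum.mul_left (2 * u))).add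
    (hp.hasSum_one.mul_left (u ^ 2))
  rw [hp.tsum_mul_eq_zero] at h
  convert h using 1
  · ext k; ring
  · ring

theorem tsum_indicator_mul_sq_le (hp : IsCenteredLogConcaveVarLeOne p) (s : Set ℤ) {t u : ℝ}
    (hs : ∀ k ∈ s, t ^ 2 ≤ ((k : ℝ) + u) ^ 2) : (∑' k, s.indicator p k) * t ^ 2 ≤ 1 + u ^ 2 := by
  rw [← tsum_mul_right]
  calc ∑' k, s.indicator p k * t ^ 2 ≤ ∑' k : ℤ, ((k : ℝ) + u) ^ 2 * p k := by
        refine ((hp.hasSum_one.summable.indicator s).mul_right _).tsum_le_tsum (fun k => ?_)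
          (hp.hasSum_add_sq_mul u).summable
        by_cases hk : k ∈ s
        · rw [indicator_of_mem hk, mul_comm]
          exact mul_le_mul_of_nonneg_right (hs k hk) (hp.nonneg k)
        · rw [indicator_of_notMem hk, zero_mul]
          exact mul_nonneg (sq_nonneg _) (hp.nonneg k)
    _ ≤ 1 + u ^ 2 := by
        rw [(hp.hasSum_add_sq_mul u).tsum_eq]
        linarith [hp.tsum_sq_mul_le_one]

theorem comp_neg (hp : IsCenteredLogConcaveVarLeOne p) :
    IsCenteredLogConcaveVarLeOne fun k => p (-k) where
  nonneg k := hp.nonneg (-k)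
  hasSum_one := (Equiv.neg ℤ).hasSum_iff.mpr hp.hasSum_one
  logConcave := hp.logConcave.comp_neg
  summable_sq_mul := by
    simpa [Function.comp_def] using
      (Equiv.neg ℤ).summable_iff.mpr hp.summable_sq_mul
  tsum_mul_eq_zero := by
    rw [← neg_eq_zero, ← hp.tsum_mul_eq_zero, ← tsum_neg, ← tsum_comp_neg]
    simp
  tsum_sq_mul_le_one := by
    rw [← tsum_comp_neg]
    simpa using hp.tsum_sq_mul_le_one

theorem upperTail_one_le (hp : IsCenteredLogConcaveVarLeOne p) : upperTail p 1 ≤ 1 / 2 := by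
  have h := hp.tsum_indicator_mul_sq_le (Ici 1) (t := 2) (u := 1) fun k hk => by
    have : (1 : ℝ) ≤ k := by exact_mod_cast mem_Ici.mp hk
    nlinarith
  rw [upperTail]
  linarith

theorem upperTail_three_le (hp : IsCenteredLogConcaveVarLeOne p) : upperTail p 3 ≤ 1 / 9 := by
  have h := hp.tsum_indicator_mul_sq_le (Ici 3) (t := 3) (u := 0) fun k hk => by
    have : (3 : ℝ) ≤ k := by exact_mod_cast mem_Ici.mp hk
    nlinarith
  rw [upperTail]
  linarith

theorem one_half_le_upperTail_zero (hp : IsCenteredLogConcaveVarLeOne p) :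
    1 / 2 ≤ upperTail p 0 := by
  have hneg := hp.tsum_indicator_mul_sq_le (Ici 0)ᶜ (t := 2) (u := -1) fun k hk => by
    have : (k : ℝ) ≤ -1 := by exact_mod_cast (show k ≤ -1 by simp at hk; omega)
    nlinarith
  have hsplit : upperTail p 0 + ∑' k, (Ici 0)ᶜ.indicator p k = 1 := by
    rw [upperTail, ← (hp.hasSum_one.summable.indicator _).tsum_add
      (hp.hasSum_one.summable.indicator _), ← hp.hasSum_one.tsum_eq]
    simp_rw [indicator_self_add_compl_apply]
  linarith

theorem upperTail_add_three_le (hp : IsCenteredLogConcaveVarLeOne p) {m : ℤ} (hm : 0 ≤ m) :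
    upperTail p (m + 3) ≤ 2 / 9 * upperTail p m := by
  have hlc := (hp.logConcave.upperTail hp.nonneg hp.hasSum_one.summable).mul_le_mul_add
    (upperTail_nonneg hp.nonneg) 3 hm
  have h0 := hp.one_half_le_upperTail_zero
  have h3 := hp.upperTail_three_le
  push_cast at hlc
  nlinarith [upperTail_nonneg hp.nonneg m, upperTail_nonneg hp.nonneg (m + 3)]

theorem upperTail_three_mul_add_one_le (hp : IsCenteredLogConcaveVarLeOne p) (j : ℕ) :
    upperTail p (3 * j + 1) ≤ 1 / 2 * (2 / 9) ^ j := by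
  induction j with
  | zero => simpa using hp.upperTail_one_le
  | succ j ih =>
    calc upperTail p (3 * (j + 1 : ℕ) + 1) = upperTail p (3 * j + 1 + 3) := by push_cast; ring_nf
      _ ≤ 2 / 9 * upperTail p (3 * j + 1) := hp.upperTail_add_three_le (by positivity)
      _ ≤ 1 / 2 * (2 / 9) ^ (j + 1) := by rw [pow_succ]; linarith

theorem upperTail_le_exp (hp : IsCenteredLogConcaveVarLeOne p) (n : ℕ) :
    upperTail p n ≤ exp (-(n / 6)) := by
  rcases Nat.eq_zero_or_pos n with rfl | hn
  · simpa [upperTail, hp.hasSum_one.tsum_eq] using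
      (hp.hasSum_one.summable.indicator _).tsum_le_tsum
        (fun k => indicator_le_self' (fun k _ => hp.nonneg k) k) hp.hasSum_one.summable
  have hhalf : 1 / 2 ≤ exp (-(1 / 2)) := by linarith [add_one_le_exp (-(1 / 2))]
  set j := (n - 1) / 3
  have hnj : (3 * j + 1 : ℤ) ≤ n ∧ (n : ℝ) ≤ 3 * j + 3 := by
    constructor
    · omega
    · exact_mod_cast (by omega : n ≤ 3 * j + 3)
  calc upperTail p n ≤ upperTail p (3 * j + 1) :=
        upperTail_antitone hp.nonneg hp.hasSum_one.summable hnj.1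
    _ ≤ 1 / 2 * (2 / 9) ^ j := hp.upperTail_three_mul_add_one_le j
    _ ≤ exp (-(1 / 2)) * exp (-(1 / 2)) ^ j := by gcongr; linarith
    _ = exp (-((j + 1) / 2)) := by rw [← exp_nat_mul, ← exp_add]; ring_nf
    _ ≤ exp (-(n / 6)) := exp_le_exp.mpr (by linarith [hnj.2])

theorem tsum_indicator_le_abs_le_two_mul_exp (hp : IsCenteredLogConcaveVarLeOne p) (n : ℕ) :
    ∑' k, {k : ℤ | (n : ℤ) ≤ |k|}.indicator p k ≤ 2 * exp (-(n / 6)) := by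
  set pneg := fun k => p (-k)
  have hs := hp.hasSum_one.summable.indicator (Ici (n : ℤ))
  have hs' : Summable fun k => (Ici (n : ℤ)).indicator pneg (-k) :=
    (hp.comp_neg.hasSum_one.summable.indicator _).comp_injective neg_injective
  have hpInd := indicator_nonneg (s := Ici (n : ℤ)) fun k _ => hp.nonneg k
  have hnegInd := indicator_nonneg (s := Ici (n : ℤ)) fun k _ => hp.comp_neg.nonneg k
  calc ∑' k, {k : ℤ | (n : ℤ) ≤ |k|}.indicator p k
      ≤ ∑' k, ((Ici (n : ℤ)).indicator p k + (Ici (n : ℤ)).indicator pneg (-k)) := by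
        refine (hp.hasSum_one.summable.indicator _).tsum_le_tsum (fun k => ?_) (hs.add hs')
        by_cases hk : (n : ℤ) ≤ |k|
        · rw [indicator_of_mem (show k ∈ {k : ℤ | (n : ℤ) ≤ |k|} from hk)]
          rcases le_or_gt 0 k with h | h
          · rw [abs_of_nonneg h] at hk
            linarith [indicator_of_mem (mem_Ici.mpr hk) p, hnegInd (-k)]
          · rw [abs_of_neg h] at hk
            have := indicator_of_mem (mem_Ici.mpr hk) pneg
            simp only [pneg, neg_neg] at this
            linarith [hpInd k]
        · rw [indicator_of_notMem (show k ∉ {k : ℤ | (n : ℤ) ≤ |k|} from hk)]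
          exact add_nonneg (hpInd k) (hnegInd (-k))
    _ = upperTail p n + upperTail pneg n := by
        rw [hs.tsum_add hs', tsum_comp_neg (fun k => (Ici (n : ℤ)).indicator pneg k), upperTail,
          upperTail]
    _ ≤ 2 * exp (-(n / 6)) := by
        linarith [hp.upperTail_le_exp n, hp.comp_neg.upperTail_le_exp n]

end IsCenteredLogConcaveVarLeOne

theorem hasSum_integral_countable {X : Type*} [MeasurableSpace X] [MeasurableSingletonClass X]
    [Countable X] {μ : Measure X} {f : X → ℝ} (hf : Integrable f μ) :
    HasSum (fun x => μ.real {x} * f x) (∫ x, f x ∂μ) := by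
  rw [← Measure.sum_smul_dirac μ] at hf
  have h := hasSum_integral_measure hf
  rw [Measure.sum_smul_dirac μ] at h
  simpa [integral_smul_measure, integral_dirac, measureReal_def] using h

theorem hasSum_mul_integral_of_law {Ω X : Type*} [MeasurableSpace Ω] [MeasurableSpace X]
    [MeasurableSingletonClass X] [Countable X] {P : Measure Ω} {Y : Ω → X} (hY : Measurable Y)
    {p : X → ℝ} (hYlaw : ∀ x, (P (Y ⁻¹' {x})).toReal = p x) {f : X → ℝ}
    (hf : Integrable (fun ω => f (Y ω)) P) :
    HasSum (fun x => p x * f x) (∫ ω, f (Y ω) ∂P) := by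
  have hfm := (measurable_of_countable f).aestronglyMeasurable (μ := P.map Y)
  have h := hasSum_integral_countable ((integrable_map_measure hfm hY.aemeasurable).mpr hf)
  simpa [map_measureReal_apply hY (measurableSet_singleton _), measureReal_def, hYlaw,
    integral_map hY.aemeasurable hfm] using h

theorem summable_sq_mul_of_summable_exp {a : ℝ} (ha : 0 < a) {p : ℤ → ℝ} (hp : ∀ k, 0 ≤ p k)
    (h : Summable fun k : ℤ => exp (a * k ^ 2) ^ 2 * p k) :
    Summable fun k : ℤ => (k : ℝ) ^ 2 * p k := by
  refine (h.mul_left (1 / (2 * a))).of_nonneg_of_le (fun k => mul_nonneg (sq_nonneg _) (hp k))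
    fun k => ?_
  have hsq : 2 * a * k ^ 2 ≤ exp (a * k ^ 2) ^ 2 := by
    nlinarith [add_one_le_exp (a * k ^ 2), mul_nonneg ha.le (sq_nonneg (k : ℝ))]
  calc (k : ℝ) ^ 2 * p k = 1 / (2 * a) * (2 * a * k ^ 2 * p k) := by field_simp
    _ ≤ 1 / (2 * a) * (exp (a * k ^ 2) ^ 2 * p k) := by gcongr; exact hp k

theorem exp_mul_sq_le_of_abs_lt_ceil {a b : ℝ} (ha : 0 < a) (hb : 1 ≤ b) {k : ℤ}
    (hk : |k| < ⌈√(1 / a * log b)⌉₊) : exp (a * k ^ 2) ≤ b := by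
  set K := √(1 / a * log b)
  have hkK : |(k : ℝ)| ≤ K := by
    have : (|k| : ℝ) + 1 ≤ ⌈K⌉₊ := by exact_mod_cast (show |k| + 1 ≤ (⌈K⌉₊ : ℤ) by omega)
    linarith [Nat.ceil_lt_add_one (sqrt_nonneg (1 / a * log b))]
  calc exp (a * k ^ 2) ≤ exp (a * K ^ 2) := by
        gcongr exp (a * ?_)
        rw [← sq_abs (k : ℝ)]
        exact pow_le_pow_left₀ (abs_nonneg _) hkK 2
    _ = b := by
        rw [sq_sqrt (by have := log_nonneg hb; positivity), ← mul_assoc, mul_one_div_cancel ha.ne',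
          one_mul, exp_log (by linarith)]

theorem MemQClass.one_div_le {a c : ℝ} {q : ℤ → ℝ} (hq : MemQClass a c q) (hc : 0 < c) {k : ℤ}
    (hk : 0 < q k) : 1 / q k ≤ c * exp (a * k ^ 2) :=
  calc 1 / q k = exp (log (1 / q k)) := (exp_log (by positivity)).symm
    _ ≤ exp (a * k ^ 2 + log c) := exp_le_exp.mpr (hq.2 k hk)
    _ = c * exp (a * k ^ 2) := by rw [exp_add, exp_log hc, mul_comm]

section ChiSquare

variable {p q W : ℝ}

theorem mul_div_sub_one_sq_le_mul_abs (hq : 0 < q) (hqW : 1 / q ≤ W) (hpq : |p - q| ≤ 1) :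
    q * (p / q - 1) ^ 2 ≤ W * |p - q| := by
  have hsq : (p - q) ^ 2 ≤ |p - q| := by
    rw [← sq_abs]; exact pow_le_of_le_one (abs_nonneg _) hpq two_ne_zero
  calc q * (p / q - 1) ^ 2 = 1 / q * (p - q) ^ 2 := by field_simp
    _ ≤ W * |p - q| := mul_le_mul hqW hsq (sq_nonneg _) ((one_div_pos.mpr hq).le.trans hqW)

theorem mul_div_sub_one_sq_le_abs_add (hp : 0 ≤ p) (hq : 0 < q) (hqW : 1 / q ≤ W) :
    q * (p / q - 1) ^ 2 ≤ |p - q| + W * p ^ 2 := by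
  have hsplit : q * (p / q - 1) ^ 2 = 1 / q * p ^ 2 + (q - 2 * p) := by field_simp; ring
  rw [hsplit, add_comm]
  gcongr
  · linarith [neg_abs_le (p - q)]

end ChiSquare

theorem chiSqDiv_le_mul_dTV_add {p q x : ℤ → ℝ} {c L : ℝ} (T : Set ℤ) (hp : ∀ k, 0 ≤ p k)
    (hq : ∀ k, 0 ≤ q k) (hpq : ∀ k, |p k - q k| ≤ 1) (hdTV : Summable fun k => |p k - q k|)
    (hc : 0 ≤ c) (hx : ∀ k, 0 ≤ x k) (hqx : ∀ k, 0 < q k → 1 / q k ≤ c * x k) (hL : 1 ≤ L)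
    (hxL : ∀ k ∉ T, c * x k ≤ L) (hT : Summable (T.indicator fun k => x k * p k ^ 2)) :
    chiSqDiv p q ≤ L * dTV p q + c * ∑' k, T.indicator (fun k => x k * p k ^ 2) k := by
  have hT0 := indicator_nonneg (s := T) fun k _ => mul_nonneg (hx k) (sq_nonneg (p k))
  have hterm : ∀ k, q k * (p k / q k - 1) ^ 2 ≤
      L * |p k - q k| + c * T.indicator (fun k => x k * p k ^ 2) k := by
    intro k
    rcases (hq k).eq_or_lt with h | h
    · rw [← h, zero_mul]
      exact add_nonneg (by positivity) (mul_nonneg hc (hT0 k))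
    by_cases hk : k ∈ T
    · rw [indicator_of_mem hk, ← mul_assoc]
      linarith [mul_div_sub_one_sq_le_abs_add (hp k) h (hqx k h),
        le_mul_of_one_le_left (abs_nonneg (p k - q k)) hL]
    · rw [indicator_of_notMem hk, mul_zero, add_zero]
      exact mul_div_sub_one_sq_le_mul_abs h ((hqx k h).trans (hxL k hk)) (hpq k)
  have hmaj := (hdTV.mul_left L).add (hT.mul_left c)
  rw [chiSqDiv, dTV, ← tsum_mul_left, ← tsum_mul_left, ← (hdTV.mul_left L).tsum_add (hT.mul_left c)]
  exact (hmaj.of_nonneg_of_le (fun k => mul_nonneg (hq k) (sq_nonneg _)) hterm).tsum_le_tsum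
    hterm hmaj

theorem tsum_mul_le_sqrt_mul_sqrt {ι : Type*} {f g : ι → ℝ} (hf : ∀ i, 0 ≤ f i)
    (hg : ∀ i, 0 ≤ g i) (hf2 : Summable fun i => f i ^ 2) (hg2 : Summable fun i => g i ^ 2) :
    ∑' i, f i * g i ≤ √(∑' i, f i ^ 2) * √(∑' i, g i ^ 2) := by
  simpa [sqrt_eq_rpow] using
    inner_le_Lp_mul_Lq_tsum_of_nonneg .two_two hf hg (by simpa using hf2) (by simpa using hg2)

theorem tsum_indicator_mul_sq_le_sqrt_mul_sqrt {ι : Type*} {p x : ι → ℝ} (s : Set ι)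
    (hp0 : ∀ i, 0 ≤ p i) (hp1 : ∀ i, p i ≤ 1) (hx : ∀ i, 0 ≤ x i)
    (hxp : Summable fun i => x i ^ 2 * p i) (hps : Summable p) :
    ∑' i, s.indicator (fun i => x i * p i ^ 2) i ≤
      √(∑' i, x i ^ 2 * p i) * √(∑' i, s.indicator p i) := by
  set g := s.indicator fun i => p i * √(p i)
  have hfg : ∀ i, s.indicator (fun i => x i * p i ^ 2) i = x i * √(p i) * g i := by
    intro i
    by_cases hi : i ∈ s
    · simp only [g, indicator_of_mem hi]
      rw [mul_assoc, ← mul_assoc (√(p i)), mul_comm (√(p i)), mul_assoc, mul_self_sqrt (hp0 i)]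
      ring
    · simp [g, indicator_of_notMem hi]
  have hf2 : ∀ i, (x i * √(p i)) ^ 2 = x i ^ 2 * p i := fun i => by
    rw [mul_pow, sq_sqrt (hp0 i)]
  have hg2 : ∀ i, g i ^ 2 ≤ s.indicator p i := by
    intro i
    by_cases hi : i ∈ s
    · simp only [g, indicator_of_mem hi]
      rw [mul_pow, sq_sqrt (hp0 i)]
      nlinarith [hp0 i, hp1 i, mul_nonneg (hp0 i) (hp0 i)]
    · simp [g, indicator_of_notMem hi]
  have hg2s : Summable fun i => g i ^ 2 :=
    (hps.indicator s).of_nonneg_of_le (fun i => sq_nonneg _) hg2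
  calc ∑' i, s.indicator (fun i => x i * p i ^ 2) i = ∑' i, x i * √(p i) * g i := tsum_congr hfg
    _ ≤ √(∑' i, (x i * √(p i)) ^ 2) * √(∑' i, g i ^ 2) :=
        tsum_mul_le_sqrt_mul_sqrt (fun i => mul_nonneg (hx i) (sqrt_nonneg _))
          (indicator_nonneg fun i _ => mul_nonneg (hp0 i) (sqrt_nonneg _)) (by simpa [hf2]) hg2s
    _ ≤ √(∑' i, x i ^ 2 * p i) * √(∑' i, s.indicator p i) := by
        simp only [hf2]
        exact mul_le_mul_of_nonneg_left
          (sqrt_le_sqrt (hg2s.tsum_le_tsum hg2 (hps.indicator s))) (sqrt_nonneg _)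

theorem chiSqDiv_le_of_memQClass {a c E : ℝ} {p q : ℤ → ℝ} (ha : 0 ≤ a) (hc : 1 ≤ c)
    (hp : ∀ k, 0 ≤ p k) (hp1 : HasSum p 1) (hq1 : HasSum q 1) (hqQ : MemQClass a c q)
    (hE : HasSum (fun k : ℤ => exp (a * k ^ 2) ^ 2 * p k) E) {n : ℕ}
    (hn : ∀ k : ℤ, |k| < n → exp (a * k ^ 2) ≤ 1 + 1 / √(dTV p q)) :
    chiSqDiv p q ≤ c * (dTV p q + √(dTV p q)) +
      c * √E * √(∑' k, {k : ℤ | (n : ℤ) ≤ |k|}.indicator p k) := by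
  set T := {k : ℤ | (n : ℤ) ≤ |k|}
  have hc0 : 0 < c := by linarith
  have hp_le : ∀ k, p k ≤ 1 := fun k => le_hasSum hp1 k fun j _ => hp j
  have hq0 : ∀ k, 0 ≤ q k := fun k => (hqQ.1 k).1
  have hpq : ∀ k, |p k - q k| ≤ 1 := fun k =>
    abs_sub_le_iff.mpr ⟨by linarith [hp_le k, hq0 k], by linarith [(hqQ.1 k).2, hp k]⟩
  have hx1 : ∀ k : ℤ, 1 ≤ exp (a * k ^ 2) := fun k => one_le_exp (by positivity)
  have hxT : Summable (T.indicator fun k => exp (a * k ^ 2) * p k ^ 2) := by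
    refine (hE.summable.of_nonneg_of_le (fun k => by positivity [hp k]) fun k => ?_).indicator T
    nlinarith [mul_nonneg (mul_nonneg (zero_le_one.trans (hx1 k)) (hp k))
      (sub_nonneg.mpr ((hp_le k).trans (hx1 k)))]
  have hL : 1 ≤ c * (1 + 1 / √(dTV p q)) := by
    nlinarith [one_div_nonneg.mpr (sqrt_nonneg (dTV p q))]
  have hχ := chiSqDiv_le_mul_dTV_add T hp hq0 hpq (hp1.summable.sub hq1.summable).abs hc0.le
    (fun k => (exp_pos _).le) (fun k hk => hqQ.one_div_le hc0 hk) hL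
    (fun k hk => by gcongr; exact hn k (by simpa [T] using hk)) hxT
  have hCS := tsum_indicator_mul_sq_le_sqrt_mul_sqrt T hp hp_le (fun k => (exp_pos _).le)
    hE.summable hp1.summable
  rw [mul_assoc, add_mul, one_mul, one_div_mul_eq_div, div_sqrt] at hχ
  rw [hE.tsum_eq] at hCS
  rw [mul_assoc c]
  exact hχ.trans (by gcongr)

theorem chiSq_le_dTV_general
    {Ω : Type*} [MeasureSpace Ω] [IsProbabilityMeasure (ℙ : Measure Ω)]
    (a c : ℝ) (ha : 0 < a) (hc : 1 ≤ c)
    (ν : Measure ℤ) [IsProbabilityMeasure ν]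
    (p q : ℤ → ℝ)
    (hq : ∀ k : ℤ, q k = (ν {k}).toReal)
    (hqQ : MemQClass a c q)
    (hlc : IsLogConcavePMF p)
    (hcent : (∑' k : ℤ, (k : ℝ) * p k) = 0)
    (hvar : (∑' k : ℤ, (k : ℝ) ^ 2 * p k) ≤ 1)
    (Y : Ω → ℤ) (hY : Measurable Y) (hYlaw : ∀ k : ℤ, (ℙ (Y ⁻¹' {k})).toReal = p k)
    (hmom : Integrable (fun ω => Real.exp (2 * a * (Y ω : ℝ) ^ 2)) ℙ) :
    chiSqDiv p q ≤ c * (dTV p q + Real.sqrt (dTV p q)) +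
      c * Real.sqrt (∫ ω, Real.exp (2 * a * (Y ω : ℝ) ^ 2)) * Real.sqrt 2 *
        Real.exp (-(1 / 12) *
          Real.sqrt ((1 / a) * Real.log (1 + 1 / Real.sqrt (dTV p q)))) := by
  have hp0 : ∀ k, 0 ≤ p k := fun k => hYlaw k ▸ ENNReal.toReal_nonneg
  have hp1 : HasSum p 1 := by
    simpa using hasSum_mul_integral_of_law hY hYlaw (f := fun _ => 1) (integrable_const 1)
  have hq1 : HasSum q 1 := by
    simpa using hasSum_mul_integral_of_law measurable_id (fun k => (hq k).symm)
      (f := fun _ => 1) (integrable_const 1)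
  have hE : HasSum (fun k : ℤ => exp (a * k ^ 2) ^ 2 * p k) (∫ ω, exp (2 * a * (Y ω : ℝ) ^ 2)) := by
    convert hasSum_mul_integral_of_law hY hYlaw (f := fun k : ℤ => exp (2 * a * (k : ℝ) ^ 2)) hmom
      using 2 with k
    rw [← exp_nat_mul, mul_comm]; ring_nf
  have hstd : IsCenteredLogConcaveVarLeOne p :=
    ⟨hp0, hp1, hlc, summable_sq_mul_of_summable_exp ha hp0 hE.summable, hcent, hvar⟩
  set K := √(1 / a * log (1 + 1 / √(dTV p q)))
  have hχ := chiSqDiv_le_of_memQClass ha.le hc hp0 hp1 hq1 hqQ hE (n := ⌈K⌉₊) fun k hk =>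
    exp_mul_sq_le_of_abs_lt_ceil ha (le_add_of_nonneg_right (by positivity)) hk
  have htail : √(∑' k, {k : ℤ | (⌈K⌉₊ : ℤ) ≤ |k|}.indicator p k) ≤ √2 * exp (-(1 / 12) * K) :=
    calc _ ≤ √(2 * exp (-(⌈K⌉₊ / 6))) := sqrt_le_sqrt (hstd.tsum_indicator_le_abs_le_two_mul_exp _)
      _ = √2 * exp (-(⌈K⌉₊ / 6) / 2) := by rw [sqrt_mul zero_le_two, exp_half]
      _ ≤ √2 * exp (-(1 / 12) * K) := by gcongr; linarith [Nat.le_ceil K]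
  calc chiSqDiv p q ≤ _ := hχ
    _ ≤ _ := by rw [mul_assoc _ (√2)]; gcongr

/-- For `a > 0`, `c ≥ 1`, `ν` with p.m.f. `q ∈ Q(a,c)`, `μ` centered log-concave with
variance at most 1 and p.m.f. `p` supported in the support of `q`, and `Y ~ μ` with
`E[e^{2aY²}] < ∞`:
`d_{χ²}(μ‖ν) ≤ c(d_TV + √d_TV) + c·√E[e^{2aY²}]·√2·exp(−(1/12)√((1/a)·log(1 + 1/√d_TV)))`. -/
theorem chiSq_le_dTV
    {Ω : Type*} [MeasureSpace Ω] [IsProbabilityMeasure (ℙ : Measure Ω)]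
    (a c : ℝ) (ha : 0 < a) (hc : 1 ≤ c)
    (μ ν : Measure ℤ) [IsProbabilityMeasure μ] [IsProbabilityMeasure ν]
    (p q : ℤ → ℝ)
    (hp : ∀ k : ℤ, p k = (μ {k}).toReal) (hq : ∀ k : ℤ, q k = (ν {k}).toReal)
    (hqQ : MemQClass a c q)
    (hlc : IsLogConcavePMF p)
    (hcent : (∑' k : ℤ, (k : ℝ) * p k) = 0)
    (hvar : (∑' k : ℤ, (k : ℝ) ^ 2 * p k) ≤ 1)
    (hsupp : ∀ k : ℤ, 0 < p k → 0 < q k)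
    (Y : Ω → ℤ) (hY : Measurable Y) (hYlaw : ∀ k : ℤ, (ℙ (Y ⁻¹' {k})).toReal = p k)
    (hmom : Integrable (fun ω => Real.exp (2 * a * (Y ω : ℝ) ^ 2)) ℙ) :
    chiSqDiv p q ≤ c * (dTV p q + Real.sqrt (dTV p q)) +
      c * Real.sqrt (∫ ω, Real.exp (2 * a * (Y ω : ℝ) ^ 2)) * Real.sqrt 2 *
        Real.exp (-(1 / 12) *
          Real.sqrt ((1 / a) * Real.log (1 + 1 / Real.sqrt (dTV p q)))) :=
  chiSq_le_dTV_general a c ha hc ν p q hq hqQ hlc hcent hvar Y hY hYlaw hmom
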